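/- arXiv:1408.1903 — 4 statements merged into one kernel-verified Lean document; each statement's English description precedes it below -/
import Mathlib

section
/- Let k and g be positive integers and let f : W^k → W^{g+k} be a morphism of Wall forms. Then there is an isomorphism of Wall forms W^g ≅ f(W^k)^⊥, where f(W^k)^⊥ is the orthogonal complement in W^{g+k} of the image of f. -/
/-!
Framework: `H`-pairs and Wall forms, following N. Perlmutter,
"Homological stability for the moduli spaces of products of spheres".

A form parameter `(G, ∂, π, ε)` is recorded together with the two
compatibility identities `∂(ε•h) = ∂(h)` and `π(∂(h)) = h + ε•h`, which hold
in the geometric situation considered in the paper and which are exactly the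
conditions needed for the standard Wall forms `W^g` to exist.
-/

section HPairs

/-- An `H`-pair: a pair of abelian groups together with a ℤ-bilinear
(i.e. biadditive) map `τ : M₋ × H → M₊`. -/
structure HPair (H : Type) [AddCommGroup H] where
  Neg : Type
  Pos : Type
  [negGrp : AddCommGroup Neg]
  [posGrp : AddCommGroup Pos]
  tau : Neg →+ H →+ Pos

attribute [instance] HPair.negGrp HPair.posGrp

variable {H : Type} [AddCommGroup H]

/-- An `H`-map of `H`-pairs. -/
structure HPairHom (M N : HPair H) where
  neg : M.Neg →+ N.Neg
  pos : M.Pos →+ N.Pos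
  comm : ∀ x h, pos (M.tau x h) = N.tau (neg x) h

/-- An isomorphism of `H`-pairs. -/
structure HPairIso (M N : HPair H) where
  toHom : HPairHom M N
  invHom : HPairHom N M
  left_neg : ∀ x, invHom.neg (toHom.neg x) = x
  right_neg : ∀ x, toHom.neg (invHom.neg x) = x
  left_pos : ∀ y, invHom.pos (toHom.pos y) = y
  right_pos : ∀ y, toHom.pos (invHom.pos y) = y

/-- An `H`-pair is finitely generated if both component groups are. -/
def HPair.FG (M : HPair H) : Prop :=
  AddGroup.FG M.Neg ∧ AddGroup.FG M.Pos

/-- The componentwise direct sum of two `H`-pairs. -/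
@[reducible] def HPair.sum (M N : HPair H) : HPair H where
  Neg := M.Neg × N.Neg
  Pos := M.Pos × N.Pos
  tau :=
    { toFun := fun x => (M.tau x.1).prod (N.tau x.2)
      map_zero' := by
        refine AddMonoidHom.ext fun h => ?_
        simp [Prod.ext_iff]
      map_add' := by
        intro x y
        refine AddMonoidHom.ext fun h => ?_
        simp [Prod.ext_iff] }

/-- The left inclusion `M → M ⊕ N`. -/
def HPairHom.inl (M N : HPair H) : HPairHom M (M.sum N) where
  neg := AddMonoidHom.inl M.Neg N.Neg
  pos := AddMonoidHom.inl M.Pos N.Pos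
  comm := by
    intro x h
    simp [HPair.sum, Prod.ext_iff]

/-- The right inclusion `N → M ⊕ N`. -/
def HPairHom.inr (M N : HPair H) : HPairHom N (M.sum N) where
  neg := AddMonoidHom.inr M.Neg N.Neg
  pos := AddMonoidHom.inr M.Pos N.Pos
  comm := by
    intro x h
    simp [HPair.sum, Prod.ext_iff]

/-- The `H`-pair `P⁰`, with `P⁰₋ = 0`, `P⁰₊ = ℤ` and `τ = 0`. -/
def P0 (H : Type) [AddCommGroup H] : HPair H where
  Neg := PUnit
  Pos := ℤ
  tau := 0

/-- The `H`-pair `P¹`, with `P¹₋ = ℤ`, `P¹₊ = H` and `τ(t, h) = t • h`. -/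
def P1 (H : Type) [AddCommGroup H] : HPair H where
  Neg := ℤ
  Pos := H
  tau := zmultiplesHom (H →+ H) (AddMonoidHom.id H)

/-- The generating-set length `d(H)`: the minimal `k` such that there is a
surjection `ℤ^k → H`. -/
noncomputable def dlen (H : Type) [AddCommGroup H] : ℕ :=
  sInf { k : ℕ | ∃ φ : (Fin k → ℤ) →+ H, Function.Surjective φ }

end HPairs

section WallForms

variable {H : Type} [AddCommGroup H]

/-- A form parameter `(G, ∂, π, ε)` for the category of `H`-pairs.  The two
compatibility identities `bd_eps` and `pi_bd` hold in the geometric setting of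
the paper and are needed for the standard Wall forms to exist. -/
structure FormParameter (H : Type) [AddCommGroup H] where
  G : HPair H
  bd : H →+ G.Pos
  pi : G.Pos →+ H
  eps : ℤ
  eps_pm : eps = 1 ∨ eps = -1
  bd_eps : ∀ h : H, bd (eps • h) = bd h
  pi_bd : ∀ h : H, pi (bd h) = h + eps • h

variable {P : FormParameter H}

/-- A Wall form structure (with parameter `P`) on the `H`-pair `C`. -/
structure WallAux (P : FormParameter H) (C : HPair H) where
  lam : C.Neg →+ C.Pos →+ ℤ
  mu : C.Pos →+ C.Pos →+ H
  alphaNeg : C.Neg →+ P.G.Neg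
  alphaPos : C.Pos → P.G.Pos
  mu_symm : ∀ y y', mu y y' = P.eps • mu y' y
  lam_tau : ∀ x x' h, lam x (C.tau x' h) = 0
  mu_tau : ∀ x h y, mu (C.tau x h) y = lam x y • h
  alphaPos_add : ∀ y y', alphaPos (y + y') = alphaPos y + alphaPos y' + P.bd (mu y y')
  mu_diag : ∀ y, mu y y = P.pi (alphaPos y)
  alphaPos_tau : ∀ x h, alphaPos (C.tau x h) = P.G.tau (alphaNeg x) h

/-- A Wall form with parameter `P`: a finitely generated `H`-pair together
with a Wall form structure. -/
structure WallForm (P : FormParameter H) where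
  carrier : HPair H
  fgNeg : AddGroup.FG carrier.Neg
  fgPos : AddGroup.FG carrier.Pos
  str : WallAux P carrier

/-- The property of an `H`-map to preserve all values of `λ`, `μ`, `α₋`, `α₊`. -/
def IsWallHom {C D : HPair H} (S : WallAux P C) (T : WallAux P D)
    (f : HPairHom C D) : Prop :=
  (∀ x y, T.lam (f.neg x) (f.pos y) = S.lam x y) ∧
  (∀ y y', T.mu (f.pos y) (f.pos y') = S.mu y y') ∧
  (∀ x, T.alphaNeg (f.neg x) = S.alphaNeg x) ∧
  (∀ y, T.alphaPos (f.pos y) = S.alphaPos y)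

/-- A morphism of Wall forms. -/
structure WallHom (M N : WallForm P) where
  hom : HPairHom M.carrier N.carrier
  isWall : IsWallHom M.str N.str hom

/-- An isomorphism of Wall forms: a morphism with a two-sided inverse morphism. -/
structure WallIso (M N : WallForm P) where
  toHom : WallHom M N
  invHom : WallHom N M
  left_neg : ∀ x, invHom.hom.neg (toHom.hom.neg x) = x
  right_neg : ∀ x, toHom.hom.neg (invHom.hom.neg x) = x
  left_pos : ∀ y, invHom.hom.pos (toHom.hom.pos y) = y
  right_pos : ∀ y, toHom.hom.pos (invHom.hom.pos y) = y

end WallForms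
section Extra

variable {H : Type} [AddCommGroup H] {P : FormParameter H}

/-- A subgroup of a finitely generated abelian group is finitely generated. -/
theorem addGroup_fg_subgroup {A : Type} [AddCommGroup A] (hA : AddGroup.FG A)
    (S : AddSubgroup A) : AddGroup.FG S := by
  haveI : Module.Finite ℤ A := Module.Finite.iff_addGroup_fg.mpr hA
  haveI : IsNoetherian ℤ A := isNoetherian_of_isNoetherianRing_of_finite ℤ A
  have h : (AddSubgroup.toIntSubmodule S).FG := IsNoetherian.noetherian _
  have h2 : Module.Finite ℤ (AddSubgroup.toIntSubmodule S) := Module.Finite.iff_fg.mpr h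
  exact Module.Finite.iff_addGroup_fg.mp h2

theorem addGroup_fg_of_module_finite {A : Type} [AddCommGroup A]
    [Module.Finite ℤ A] : AddGroup.FG A :=
  Module.Finite.iff_addGroup_fg.mp inferInstance

end Extra

section StdWall

variable {H : Type} [AddCommGroup H]

/-- The underlying `H`-pair of the standard Wall form of rank `g`:
`W^g₋ = ℤ^g` and `W^g₊ = ℤ^g × H^g`  (the first factor records the
`b`-coordinates, the second the `τ(a_i, -)`-coordinates). -/
@[reducible] def stdPair (H : Type) [AddCommGroup H] (g : ℕ) : HPair H where
  Neg := Fin g → ℤ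
  Pos := (Fin g → ℤ) × (Fin g → H)
  tau :=
    { toFun := fun x =>
        { toFun := fun h => (0, fun i => x i • h)
          map_zero' := by
            refine Prod.ext rfl ?_
            funext i
            simp
          map_add' := by
            intro h h'
            refine Prod.ext (by simp) ?_
            funext i
            simp [smul_add] }
      map_zero' := by
        refine AddMonoidHom.ext fun h => ?_
        refine Prod.ext rfl ?_
        funext i
        simp
      map_add' := by
        intro x x'
        refine AddMonoidHom.ext fun h => ?_
        refine Prod.ext (by simp) ?_
        funext i
        simp [add_smul] }

variable (P : FormParameter H)

/-- The standard Wall form `W^g` of rank `g` with parameter `P`. -/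
def stdWall [AddGroup.FG H] (g : ℕ) : WallForm P where
  carrier := stdPair H g
  fgNeg := by
    have : Module.Finite ℤ (Fin g → ℤ) := inferInstance
    exact addGroup_fg_of_module_finite
  fgPos := by
    haveI : Module.Finite ℤ H := Module.Finite.iff_addGroup_fg.mpr ‹AddGroup.FG H›
    have : Module.Finite ℤ ((Fin g → ℤ) × (Fin g → H)) := inferInstance
    exact addGroup_fg_of_module_finite
  str :=
    { lam :=
        { toFun := fun x =>
            { toFun := fun w => ∑ i, x i * w.1 i
              map_zero' := by simp
              map_add' := by
                intro w w'
                simp [mul_add, Finset.sum_add_distrib] }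
          map_zero' := by
            refine AddMonoidHom.ext fun w => ?_
            show (∑ i, (0 : Fin g → ℤ) i * w.1 i) = 0
            simp
          map_add' := by
            intro x x'
            refine AddMonoidHom.ext fun w => ?_
            simp [add_mul, Finset.sum_add_distrib] }
      mu :=
        { toFun := fun w =>
            { toFun := fun w' => (∑ i, w'.1 i • w.2 i) + P.eps • ∑ i, w.1 i • w'.2 i
              map_zero' := by simp
              map_add' := by
                intro w' w''
                simp only [Prod.fst_add, Prod.snd_add, Pi.add_apply, add_smul, smul_add,
                  Finset.sum_add_distrib]
                abel }
          map_zero' := by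
            refine AddMonoidHom.ext fun w' => ?_
            simp
          map_add' := by
            intro w w'
            refine AddMonoidHom.ext fun w'' => ?_
            simp only [Prod.fst_add, Prod.snd_add, Pi.add_apply, add_smul, smul_add,
              Finset.sum_add_distrib, AddMonoidHom.coe_mk, ZeroHom.coe_mk,
              AddMonoidHom.add_apply]
            abel }
      alphaNeg := 0
      alphaPos := fun w => P.bd (∑ i, w.1 i • w.2 i)
      mu_symm := by
        intro y y'
        have he : P.eps * P.eps = 1 := by
          rcases P.eps_pm with h | h <;> simp [h]
        show (∑ i, y'.1 i • y.2 i) + P.eps • ∑ i, y.1 i • y'.2 i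
            = P.eps • ((∑ i, y.1 i • y'.2 i) + P.eps • ∑ i, y'.1 i • y.2 i)
        rw [smul_add, smul_smul, he, one_smul, add_comm]
      lam_tau := by
        intro x x' h
        show (∑ i, x i * (0 : Fin _ → ℤ) i) = 0
        simp
      mu_tau := by
        intro x h y
        show (∑ i, y.1 i • (fun i => x i • h) i) + P.eps • ∑ i, (0 : Fin _ → ℤ) i • y.2 i
            = (∑ i, x i * y.1 i) • h
        simp only [Pi.zero_apply, zero_smul, Finset.sum_const_zero, smul_zero, add_zero]
        rw [Finset.sum_smul]
        congr 1
        funext i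
        rw [smul_smul, mul_comm]
      alphaPos_add := by
        intro y y'
        show P.bd (∑ i, (y.1 i + y'.1 i) • (y.2 i + y'.2 i))
            = P.bd (∑ i, y.1 i • y.2 i) + P.bd (∑ i, y'.1 i • y'.2 i)
              + P.bd ((∑ i, y'.1 i • y.2 i) + P.eps • ∑ i, y.1 i • y'.2 i)
        have expand : ∀ i : Fin _, (y.1 i + y'.1 i) • (y.2 i + y'.2 i)
            = (y.1 i • y.2 i + y'.1 i • y'.2 i) + (y'.1 i • y.2 i + y.1 i • y'.2 i) := by
          intro i
          rw [add_smul, smul_add, smul_add]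
          abel
        rw [Finset.sum_congr rfl fun i _ => expand i, Finset.sum_add_distrib,
          Finset.sum_add_distrib, Finset.sum_add_distrib, map_add, map_add, map_add, map_add,
          P.bd_eps]
      mu_diag := by
        intro y
        show (∑ i, y.1 i • y.2 i) + P.eps • ∑ i, y.1 i • y.2 i
            = P.pi (P.bd (∑ i, y.1 i • y.2 i))
        rw [P.pi_bd]
      alphaPos_tau := by
        intro x h
        show P.bd (∑ i, (0 : Fin _ → ℤ) i • (fun i => x i • h) i) = P.G.tau ((0 : _ →+ _) x) h
        simp }

variable {P}

/-- The `i`-th standard generator `a_i ∈ W^g₋`. -/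
def stdA [AddGroup.FG H] {g : ℕ} (i : Fin g) : (stdWall P g).carrier.Neg :=
  Pi.single i 1

/-- The `i`-th standard generator `b_i ∈ W^g₊`. -/
def stdB [AddGroup.FG H] {g : ℕ} (i : Fin g) : (stdWall P g).carrier.Pos :=
  (Pi.single i 1, 0)

end StdWall
section SubPairs

variable {H : Type} [AddCommGroup H] {P : FormParameter H}

/-- A sub-`H`-pair of the `H`-pair `C`. -/
structure SubPair (C : HPair H) where
  neg : AddSubgroup C.Neg
  pos : AddSubgroup C.Pos
  tau_mem : ∀ x ∈ neg, ∀ h, C.tau x h ∈ pos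

/-- The componentwise intersection of two sub-`H`-pairs. -/
def SubPair.inf {C : HPair H} (N N' : SubPair C) : SubPair C where
  neg := N.neg ⊓ N'.neg
  pos := N.pos ⊓ N'.pos
  tau_mem := fun x hx h => ⟨N.tau_mem x hx.1 h, N'.tau_mem x hx.2 h⟩

/-- The image of an `H`-map, as a sub-`H`-pair of the codomain. -/
def HPairHom.rangeSub {C D : HPair H} (f : HPairHom C D) : SubPair D where
  neg := f.neg.range
  pos := f.pos.range
  tau_mem := by
    rintro x ⟨a, rfl⟩ h
    exact ⟨C.tau a h, f.comm a h⟩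

/-- The kernel of an `H`-map, as a sub-`H`-pair of the domain. -/
def HPairHom.kerSub {C D : HPair H} (f : HPairHom C D) : SubPair C where
  neg := f.neg.ker
  pos := f.pos.ker
  tau_mem := by
    intro x hx h
    have hx' : f.neg x = 0 := hx
    have h2 : f.pos (C.tau x h) = D.tau (f.neg x) h := f.comm x h
    rw [hx'] at h2
    have h3 : f.pos (C.tau x h) = 0 := by
      rw [h2, map_zero, AddMonoidHom.zero_apply]
    exact h3

/-- The orthogonal complement of a sub-`H`-pair, with respect to a Wall form
structure `S` on the ambient `H`-pair. -/
def SubPair.perp {C : HPair H} (S : WallAux P C) (N : SubPair C) : SubPair C where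
  neg :=
    { carrier := { x | ∀ w ∈ N.pos, S.lam x w = 0 }
      add_mem' := by
        intro a b ha hb w hw
        rw [map_add, AddMonoidHom.add_apply, ha w hw, hb w hw, add_zero]
      zero_mem' := by
        intro w hw
        rw [map_zero, AddMonoidHom.zero_apply]
      neg_mem' := by
        intro a ha w hw
        rw [map_neg, AddMonoidHom.neg_apply, ha w hw, neg_zero] }
  pos :=
    { carrier := { y | (∀ v ∈ N.neg, S.lam v y = 0) ∧ ∀ w ∈ N.pos, S.mu y w = 0 }
      add_mem' := by
        intro a b ha hb
        refine ⟨fun v hv => ?_, fun w hw => ?_⟩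
        · rw [map_add, ha.1 v hv, hb.1 v hv, add_zero]
        · rw [map_add, AddMonoidHom.add_apply, ha.2 w hw, hb.2 w hw, add_zero]
      zero_mem' := by
        refine ⟨fun v hv => ?_, fun w hw => ?_⟩
        · rw [map_zero]
        · rw [map_zero, AddMonoidHom.zero_apply]
      neg_mem' := by
        intro a ha
        refine ⟨fun v hv => ?_, fun w hw => ?_⟩
        · rw [map_neg, ha.1 v hv, neg_zero]
        · rw [map_neg, AddMonoidHom.neg_apply, ha.2 w hw, neg_zero] }
  tau_mem := by
    intro x hx h
    refine ⟨fun v hv => S.lam_tau v x h, fun w hw => ?_⟩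
    rw [S.mu_tau x h w, hx w hw, zero_smul]

/-- Orthogonality of two sub-`H`-pairs with respect to a Wall form structure
`S`: trivial intersection and mutual containment in orthogonal complements. -/
def OrthogonalIn {C : HPair H} (S : WallAux P C) (N N' : SubPair C) : Prop :=
  N.neg ⊓ N'.neg = ⊥ ∧ N.pos ⊓ N'.pos = ⊥ ∧
  N.neg ≤ (N'.perp S).neg ∧ N.pos ≤ (N'.perp S).pos ∧
  N'.neg ≤ (N.perp S).neg ∧ N'.pos ≤ (N.perp S).pos

/-- The underlying `H`-pair of a sub-`H`-pair. -/
@[reducible] def SubPair.toPair {C : HPair H} (N : SubPair C) : HPair H where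
  Neg := N.neg
  Pos := N.pos
  tau :=
    { toFun := fun x =>
        { toFun := fun h => ⟨C.tau x h, N.tau_mem x x.2 h⟩
          map_zero' := by
            apply Subtype.ext
            simp
          map_add' := by
            intro h h'
            apply Subtype.ext
            simp }
      map_zero' := by
        refine AddMonoidHom.ext fun h => ?_
        apply Subtype.ext
        simp
      map_add' := by
        intro x x'
        refine AddMonoidHom.ext fun h => ?_
        apply Subtype.ext
        simp }

/-- The restriction of a Wall form structure to a sub-`H`-pair. -/
def SubPair.restrict {C : HPair H} (S : WallAux P C) (N : SubPair C) :
    WallAux P N.toPair where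
  lam :=
    { toFun := fun x => (S.lam (x : C.Neg)).comp N.pos.subtype
      map_zero' := by
        refine AddMonoidHom.ext fun y => ?_
        simp
      map_add' := by
        intro x x'
        refine AddMonoidHom.ext fun y => ?_
        simp }
  mu :=
    { toFun := fun y => (S.mu (y : C.Pos)).comp N.pos.subtype
      map_zero' := by
        refine AddMonoidHom.ext fun y => ?_
        simp
      map_add' := by
        intro y y'
        refine AddMonoidHom.ext fun y'' => ?_
        simp }
  alphaNeg := S.alphaNeg.comp N.neg.subtype
  alphaPos := fun y => S.alphaPos (y : C.Pos)
  mu_symm := fun y y' => S.mu_symm (y : C.Pos) y'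
  lam_tau := fun x x' h => S.lam_tau (x : C.Neg) x' h
  mu_tau := fun x h y => S.mu_tau (x : C.Neg) h y
  alphaPos_add := fun y y' => S.alphaPos_add (y : C.Pos) y'
  mu_diag := fun y => S.mu_diag (y : C.Pos)
  alphaPos_tau := fun x h => S.alphaPos_tau (x : C.Neg) h

/-- A sub-`H`-pair of (the carrier of) a Wall form is itself a Wall form, via
the restricted structure maps. -/
def SubPair.toWall {M : WallForm P} (N : SubPair M.carrier) : WallForm P where
  carrier := N.toPair
  fgNeg := addGroup_fg_subgroup M.fgNeg N.neg
  fgPos := addGroup_fg_subgroup M.fgPos N.pos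
  str := N.restrict M.str

end SubPairs
section SumAndRank

variable {H : Type} [AddCommGroup H] {P : FormParameter H}

/-- The orthogonal direct sum of two Wall forms. -/
def WallForm.sum (M N : WallForm P) : WallForm P where
  carrier := M.carrier.sum N.carrier
  fgNeg := by
    haveI : Module.Finite ℤ M.carrier.Neg := Module.Finite.iff_addGroup_fg.mpr M.fgNeg
    haveI : Module.Finite ℤ N.carrier.Neg := Module.Finite.iff_addGroup_fg.mpr N.fgNeg
    have : Module.Finite ℤ (M.carrier.Neg × N.carrier.Neg) := inferInstance
    exact Module.Finite.iff_addGroup_fg.mp this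
  fgPos := by
    haveI : Module.Finite ℤ M.carrier.Pos := Module.Finite.iff_addGroup_fg.mpr M.fgPos
    haveI : Module.Finite ℤ N.carrier.Pos := Module.Finite.iff_addGroup_fg.mpr N.fgPos
    have : Module.Finite ℤ (M.carrier.Pos × N.carrier.Pos) := inferInstance
    exact Module.Finite.iff_addGroup_fg.mp this
  str :=
    { lam :=
        { toFun := fun x => (M.str.lam x.1).coprod (N.str.lam x.2)
          map_zero' := by
            refine AddMonoidHom.ext fun y => ?_
            simp
          map_add' := by
            intro x x'
            refine AddMonoidHom.ext fun y => ?_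
            simp
            abel }
      mu :=
        { toFun := fun y => (M.str.mu y.1).coprod (N.str.mu y.2)
          map_zero' := by
            refine AddMonoidHom.ext fun y' => ?_
            simp
          map_add' := by
            intro y y'
            refine AddMonoidHom.ext fun y'' => ?_
            simp
            abel }
      alphaNeg := (M.str.alphaNeg).coprod (N.str.alphaNeg)
      alphaPos := fun y => M.str.alphaPos y.1 + N.str.alphaPos y.2
      mu_symm := by
        intro y y'
        show M.str.mu y.1 y'.1 + N.str.mu y.2 y'.2
            = P.eps • (M.str.mu y'.1 y.1 + N.str.mu y'.2 y.2)
        rw [smul_add, M.str.mu_symm y.1 y'.1, N.str.mu_symm y.2 y'.2]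
      lam_tau := by
        intro x x' h
        show M.str.lam x.1 (M.carrier.tau x'.1 h) + N.str.lam x.2 (N.carrier.tau x'.2 h) = 0
        rw [M.str.lam_tau, N.str.lam_tau, add_zero]
      mu_tau := by
        intro x h y
        show M.str.mu (M.carrier.tau x.1 h) y.1 + N.str.mu (N.carrier.tau x.2 h) y.2
            = (M.str.lam x.1 y.1 + N.str.lam x.2 y.2) • h
        rw [M.str.mu_tau, N.str.mu_tau, add_smul]
      alphaPos_add := by
        intro y y'
        show M.str.alphaPos (y.1 + y'.1) + N.str.alphaPos (y.2 + y'.2)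
            = (M.str.alphaPos y.1 + N.str.alphaPos y.2)
              + (M.str.alphaPos y'.1 + N.str.alphaPos y'.2)
              + P.bd (M.str.mu y.1 y'.1 + N.str.mu y.2 y'.2)
        rw [M.str.alphaPos_add, N.str.alphaPos_add, map_add]
        abel
      mu_diag := by
        intro y
        show M.str.mu y.1 y.1 + N.str.mu y.2 y.2
            = P.pi (M.str.alphaPos y.1 + N.str.alphaPos y.2)
        rw [map_add, M.str.mu_diag, N.str.mu_diag]
      alphaPos_tau := by
        intro x h
        show M.str.alphaPos (M.carrier.tau x.1 h) + N.str.alphaPos (N.carrier.tau x.2 h)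
            = P.G.tau (M.str.alphaNeg x.1 + N.str.alphaNeg x.2) h
        rw [M.str.alphaPos_tau, N.str.alphaPos_tau, map_add, AddMonoidHom.add_apply] }

variable [AddGroup.FG H]

/-- `rankGE M g` expresses the inequality `r(M) ≥ g` for the rank of a Wall
form: there exists a morphism of Wall forms `W^g → M`. -/
def rankGE (M : WallForm P) (g : ℕ) : Prop :=
  Nonempty (WallHom (stdWall P g) M)

/-- `srankGE M g` expresses the inequality `r̄(M) ≥ g` for the stable rank of
a Wall form: `r(M ⊕ W^j) ≥ g + j` for some `j`. -/
def srankGE (M : WallForm P) (g : ℕ) : Prop :=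
  ∃ j : ℕ, rankGE (M.sum (stdWall P j)) (g + j)

end SumAndRank

section Duality

variable {H : Type} [AddCommGroup H] {P : FormParameter H}

/-- The duality map `T⁰ : M₋ → Hom(M, P⁰)` of a Wall form. -/
def dualT0 (M : WallForm P) (v : M.carrier.Neg) : HPairHom M.carrier (P0 H) where
  neg := 0
  pos := M.str.lam v
  comm := by
    intro x h
    show M.str.lam v (M.carrier.tau x h) = ((P0 H).tau 0) h
    rw [M.str.lam_tau]
    show (0 : ℤ) = ((0 : _ →+ (H →+ ℤ)) 0) h
    rfl

/-- The duality map `T¹ : M₊ → Hom(M, P¹)` of a Wall form. -/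
def dualT1 (M : WallForm P) (w : M.carrier.Pos) : HPairHom M.carrier (P1 H) where
  neg := M.str.lam.flip w
  pos := M.str.mu.flip w
  comm := by
    intro x h
    show M.str.mu (M.carrier.tau x h) w = (P1 H).tau (M.str.lam x w) h
    rw [M.str.mu_tau]
    show M.str.lam x w • h = (M.str.lam x w • AddMonoidHom.id H) h
    simp

end Duality


/-
In coordinates `f₋ = A` is an integer matrix and `f₊ (b, t) = (B b, ψ b + A t)`, and preservation
of `λ` forces `Aᵀ B = 1`. So `ker Aᵀ` is a free complement of rank `g` to the image of `B`, and a
basis of it completes `(A, B)` to mutually inverse square matrices `[A | D]ᵀ` and `[B | C]`. The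
complement `f(W^k)^⊥` is cut out by `Bᵀ x = 0` in degree `-` and by `Aᵀ c = 0`, `Bᵀ s = -ε ψᵀ c`
in degree `+`; the maps `x ↦ D x` and `(b, t) ↦ (C b, θ b + D t)`, with `θ b = -ε A ψᵀ (C b)`,
land there, preserve the form because `Aᵀ C = 0` and `Dᵀ C = 1`, and have inverse
`(c, s) ↦ (Dᵀ c, Cᵀ s)`.
-/

open Matrix

section HValued

variable {H : Type*} [AddCommGroup H] {ι κ σ : Type*} [Fintype κ] [Fintype σ]

def dotH (x : κ → ℤ) : (κ → H) →+ H where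
  toFun v := ∑ i, x i • v i
  map_zero' := by simp
  map_add' v w := by simp [smul_add, Finset.sum_add_distrib]

theorem dotH_apply (x : κ → ℤ) (v : κ → H) : dotH x v = ∑ i, x i • v i := rfl

theorem dotH_add_left (x y : κ → ℤ) (v : κ → H) : dotH (x + y) v = dotH x v + dotH y v := by
  simp [dotH_apply, add_smul, Finset.sum_add_distrib]

@[simp] theorem dotH_zero_left (v : κ → H) : dotH (0 : κ → ℤ) v = 0 := by
  simp [dotH_apply]

theorem dotH_single_left [DecidableEq κ] (i : κ) (z : ℤ) (v : κ → H) :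
    dotH (Pi.single i z) v = z • v i := by
  simp [dotH_apply, Pi.single_apply]

theorem forall_dotH_eq_zero_iff [DecidableEq κ] {u : κ → H} :
    (∀ b, dotH b u = 0) ↔ u = 0 :=
  ⟨fun h => funext fun i => by simpa [dotH_single_left] using h (Pi.single i 1),
    fun h b => by rw [h, map_zero]⟩

def Matrix.mulVecH (M : Matrix ι κ ℤ) : (κ → H) →+ (ι → H) :=
  AddMonoidHom.pi fun i => dotH (M i)

theorem Matrix.mulVecH_apply (M : Matrix ι κ ℤ) (v : κ → H) (i : ι) :
    M.mulVecH v i = dotH (M i) v := rfl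

theorem dotH_mulVec [Fintype ι] (M : Matrix ι κ ℤ) (x : κ → ℤ) (v : ι → H) :
    dotH (M *ᵥ x) v = dotH x (Mᵀ.mulVecH v) := by
  simp only [dotH_apply, mulVec, dotProduct, mulVecH_apply, transpose_apply, Finset.sum_smul,
    Finset.smul_sum, mul_smul]
  rw [Finset.sum_comm]
  exact Finset.sum_congr rfl fun j _ => Finset.sum_congr rfl fun i _ => smul_comm _ _ _

theorem Matrix.mulVecH_mulVecH (M : Matrix ι κ ℤ) (N : Matrix κ σ ℤ) (v : σ → H) :
    M.mulVecH (N.mulVecH v) = (M * N).mulVecH v := by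
  ext i
  simp only [mulVecH_apply, dotH_apply, mul_apply, Finset.sum_smul, Finset.smul_sum, mul_smul]
  exact Finset.sum_comm

@[simp] theorem Matrix.one_mulVecH [DecidableEq κ] (v : κ → H) :
    (1 : Matrix κ κ ℤ).mulVecH v = v := by
  ext i
  simp [mulVecH_apply, dotH_apply, one_apply]

@[simp] theorem Matrix.zero_mulVecH (v : κ → H) : (0 : Matrix ι κ ℤ).mulVecH v = 0 := by
  ext i
  simp [mulVecH_apply, dotH_apply]

theorem Matrix.add_mulVecH (M N : Matrix ι κ ℤ) (v : κ → H) :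
    (M + N).mulVecH v = M.mulVecH v + N.mulVecH v := by
  ext i
  simp [mulVecH_apply, dotH_apply, add_smul, Finset.sum_add_distrib]

theorem Matrix.mulVecH_smul_const (M : Matrix ι κ ℤ) (x : κ → ℤ) (h : H) :
    M.mulVecH (fun j => x j • h) = fun i => (M *ᵥ x) i • h := by
  ext i
  simp [mulVecH_apply, dotH_apply, mulVec, dotProduct, Finset.sum_smul, mul_smul]

def AddMonoidHom.transposeH [Fintype ι] [DecidableEq κ] (ψ : (κ → ℤ) →+ (ι → H)) :
    (ι → ℤ) →+ (κ → H) where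
  toFun c i := dotH c (ψ (Pi.single i 1))
  map_zero' := by ext; simp
  map_add' c c' := by ext; simp [dotH_add_left]

theorem dotH_transposeH [Fintype ι] [DecidableEq κ] (ψ : (κ → ℤ) →+ (ι → H)) (c : ι → ℤ)
    (b : κ → ℤ) : dotH c (ψ b) = dotH b (ψ.transposeH c) := by
  conv_lhs => rw [← Finset.univ_sum_single b]
  simp only [map_sum, dotH_apply (x := b)]
  refine Finset.sum_congr rfl fun j _ => ?_
  have hsingle : Pi.single j (b j) = b j • (Pi.single j 1 : κ → ℤ) := by
    rw [← Pi.single_smul', smul_eq_mul, mul_one]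
  rw [hsingle, map_zsmul, map_zsmul]
  rfl

end HValued

section Complement

variable {R : Type*} [CommRing R] {m κ ι : Type*} [Fintype m] [DecidableEq m]
  [Fintype κ] [DecidableEq κ] [Fintype ι] [DecidableEq ι]

/-- `(C, D)` completes `(A, B)` to mutually inverse square matrices:
`[A | D]ᵀ * [B | C] = 1` and `[B | C] * [A | D]ᵀ = 1`. -/
structure IsComplementPair (A B : Matrix m κ R) (C D : Matrix m ι R) : Prop where
  AB : Aᵀ * B = 1
  AC : Aᵀ * C = 0
  DB : Dᵀ * B = 0
  DC : Dᵀ * C = 1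
  sum : B * Aᵀ + C * Dᵀ = 1

theorem IsComplementPair.symm {A B : Matrix m κ R} {C D : Matrix m ι R}
    (h : IsComplementPair A B C D) : IsComplementPair B A D C := by
  refine ⟨?_, ?_, ?_, ?_, ?_⟩
  · simpa [transpose_mul] using congr_arg transpose h.AB
  · simpa [transpose_mul] using congr_arg transpose h.DB
  · simpa [transpose_mul] using congr_arg transpose h.AC
  · simpa [transpose_mul] using congr_arg transpose h.DC
  · simpa [transpose_mul] using congr_arg transpose h.sum

theorem IsComplementPair.mulVec_mulVec_eq_self {A B : Matrix m κ R} {C D : Matrix m ι R}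
    (h : IsComplementPair A B C D) {v : m → R} (hv : Aᵀ *ᵥ v = 0) : C *ᵥ (Dᵀ *ᵥ v) = v :=
  calc C *ᵥ (Dᵀ *ᵥ v) = (B * Aᵀ + C * Dᵀ) *ᵥ v := by
        rw [add_mulVec, ← mulVec_mulVec, ← mulVec_mulVec, hv, mulVec_zero, zero_add]
    _ = v := by rw [h.sum, one_mulVec]

theorem exists_isComplementPair [IsDomain R] [IsPrincipalIdealRing R] {g : ℕ}
    (hcard : Fintype.card m = g + Fintype.card κ) (A B : Matrix m κ R) (hAB : Aᵀ * B = 1) :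
    ∃ C D : Matrix m (Fin g) R, IsComplementPair A B C D := by
  set K := LinearMap.ker Aᵀ.mulVecLin
  have hAB' (u : κ → R) : Aᵀ *ᵥ (B *ᵥ u) = u := by rw [mulVec_mulVec, hAB, one_mulVec]
  have hK : Module.finrank R K = g := by
    have := K.finrank_quotient_add_finrank
    rw [(Aᵀ.mulVecLin.quotKerEquivOfSurjective fun u => ⟨B *ᵥ u, hAB' u⟩).finrank_eq] at this
    simp only [Module.finrank_fintype_fun_eq_card, hcard] at this
    omega
  let b := Module.finBasisOfFinrankEq R K hK
  -- the projection onto `K` along the image of `B`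
  let pr : (m → R) →ₗ[R] K := LinearMap.codRestrict K
    (LinearMap.id - B.mulVecLin ∘ₗ Aᵀ.mulVecLin) fun v => by
      change Aᵀ *ᵥ (v - B *ᵥ (Aᵀ *ᵥ v)) = 0
      rw [mulVec_sub, hAB', sub_self]
  have hpr (v : m → R) : (pr v : m → R) = v - B *ᵥ (Aᵀ *ᵥ v) := rfl
  let C := LinearMap.toMatrix' (K.subtype ∘ₗ b.equivFun.symm.toLinearMap)
  let D := (LinearMap.toMatrix' (b.equivFun.toLinearMap ∘ₗ pr))ᵀ
  have hC (u : Fin g → R) : C *ᵥ u = (b.equivFun.symm u : m → R) := LinearMap.toMatrix'_mulVec _ u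
  have hD (v : m → R) : Dᵀ *ᵥ v = b.equivFun (pr v) := by
    simp only [D, transpose_transpose, LinearMap.toMatrix'_mulVec]; rfl
  have hAC (u : Fin g → R) : Aᵀ *ᵥ (C *ᵥ u) = 0 := by
    rw [hC]; exact (b.equivFun.symm u).2
  refine ⟨C, D, hAB, mulVec_injective (funext fun u => ?_), mulVec_injective (funext fun v => ?_),
    mulVec_injective (funext fun u => ?_), mulVec_injective (funext fun v => ?_)⟩
  · rw [← mulVec_mulVec, hAC, zero_mulVec]
  · have : pr (B *ᵥ v) = 0 := Subtype.ext (by rw [hpr, hAB', sub_self]; rfl)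
    rw [← mulVec_mulVec, hD, this, map_zero, zero_mulVec]
  · have : pr (C *ᵥ u) = b.equivFun.symm u :=
      Subtype.ext (by rw [hpr, hAC, mulVec_zero, sub_zero, hC])
    rw [← mulVec_mulVec, hD, this, LinearEquiv.apply_symm_apply, one_mulVec]
  · rw [add_mulVec, ← mulVec_mulVec, ← mulVec_mulVec, hD, hC, LinearEquiv.symm_apply_apply, hpr,
      one_mulVec, add_sub_cancel]

end Complement

section StdPairCoordinates

variable {H : Type} [AddCommGroup H] {k n : ℕ} (φ : HPairHom (stdPair H k) (stdPair H n))

def HPairHom.negMatrix : Matrix (Fin n) (Fin k) ℤ :=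
  LinearMap.toMatrix' φ.neg.toIntLinearMap

def HPairHom.posMatrix : Matrix (Fin n) (Fin k) ℤ :=
  LinearMap.toMatrix'
    ((AddMonoidHom.fst _ _).comp (φ.pos.comp (AddMonoidHom.inl _ _))).toIntLinearMap

def HPairHom.posH : (Fin k → ℤ) →+ (Fin n → H) :=
  (AddMonoidHom.snd _ _).comp (φ.pos.comp (AddMonoidHom.inl _ _))

theorem HPairHom.neg_eq_mulVec (x : Fin k → ℤ) : φ.neg x = φ.negMatrix *ᵥ x :=
  (LinearMap.toMatrix'_mulVec φ.neg.toIntLinearMap x).symm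

theorem HPairHom.pos_inr (t : Fin k → H) : φ.pos (0, t) = (0, φ.negMatrix.mulVecH t) := by
  suffices φ.pos.comp (AddMonoidHom.inr _ _) =
      (AddMonoidHom.inr _ _).comp φ.negMatrix.mulVecH from DFunLike.congr_fun this t
  refine AddMonoidHom.functions_ext _ _ _ fun i h => ?_
  have hτ : Pi.single i h = fun j => (Pi.single i 1 : Fin k → ℤ) j • h := by
    ext j; simp [Pi.single_apply]
  have := φ.comm (Pi.single i 1) h
  simp only [AddMonoidHom.comp_apply, AddMonoidHom.inr_apply, hτ, mulVecH_smul_const,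
    ← φ.neg_eq_mulVec]
  exact this

theorem HPairHom.pos_eq (b : Fin k → ℤ) (t : Fin k → H) :
    φ.pos (b, t) = (φ.posMatrix *ᵥ b, φ.posH b + φ.negMatrix.mulVecH t) := by
  have hpos : φ.pos (b, 0) = (φ.posMatrix *ᵥ b, φ.posH b) :=
    Prod.ext (LinearMap.toMatrix'_mulVec
      ((AddMonoidHom.fst _ _).comp (φ.pos.comp (AddMonoidHom.inl _ _))).toIntLinearMap b).symm rfl
  have hsplit : ((b, t) : (Fin k → ℤ) × (Fin k → H)) = (b, 0) + (0, t) := by simp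
  rw [hsplit, map_add, hpos, φ.pos_inr, Prod.mk_add_mk, add_zero]

end StdPairCoordinates

section StdWallCoordinates

variable {H : Type} [AddCommGroup H] [AddGroup.FG H] {P : FormParameter H} {k n : ℕ}
  (f : WallHom (stdWall P k) (stdWall P n))

/-- `f` as a map of the reducible standard pairs, on which coordinates are computed. -/
def WallHom.stdHom : HPairHom (stdPair H k) (stdPair H n) := f.hom

theorem WallHom.negMatrix_transpose_mul_posMatrix :
    f.stdHom.negMatrixᵀ * f.stdHom.posMatrix = 1 := by
  refine mulVec_injective (funext fun b => dotProduct_eq _ _ fun x => ?_)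
  have h : f.stdHom.neg x ⬝ᵥ (f.stdHom.pos (b, 0)).1 = x ⬝ᵥ b := f.isWall.1 x (b, 0)
  rw [f.stdHom.neg_eq_mulVec, f.stdHom.pos_eq] at h
  rw [← mulVec_mulVec, mulVec_transpose, ← dotProduct_mulVec, dotProduct_comm, h, one_mulVec,
    dotProduct_comm]


theorem WallHom.mem_perp_neg (v : Fin n → ℤ) :
    v ∈ (f.hom.rangeSub.perp (stdWall P n).str).neg ↔ f.stdHom.posMatrixᵀ *ᵥ v = 0 := by
  change (∀ w ∈ f.stdHom.pos.range, v ⬝ᵥ w.1 = 0) ↔ _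
  rw [mulVec_transpose, ← dotProduct_eq_zero_iff]
  refine ⟨fun h b => ?_, ?_⟩
  · simpa [f.stdHom.pos_eq, dotProduct_mulVec] using h _ ⟨(b, 0), rfl⟩
  · rintro h _ ⟨⟨b, t⟩, rfl⟩
    rw [f.stdHom.pos_eq, dotProduct_mulVec, h]

theorem WallHom.mem_perp_pos (c : Fin n → ℤ) (s : Fin n → H) :
    ((c, s) : (Fin n → ℤ) × (Fin n → H)) ∈ (f.hom.rangeSub.perp (stdWall P n).str).pos ↔
      f.stdHom.negMatrixᵀ *ᵥ c = 0 ∧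
        f.stdHom.posMatrixᵀ.mulVecH s = (-P.eps) • f.stdHom.posH.transposeH c := by
  change (∀ v ∈ f.stdHom.neg.range, v ⬝ᵥ c = 0) ∧
    (∀ w ∈ f.stdHom.pos.range, dotH w.1 s + P.eps • dotH c w.2 = 0) ↔ _
  have hmu (b t) : dotH (f.stdHom.pos (b, t)).1 s + P.eps • dotH c (f.stdHom.pos (b, t)).2 =
      dotH b (f.stdHom.posMatrixᵀ.mulVecH s + P.eps • f.stdHom.posH.transposeH c) +
        P.eps • dotH (f.stdHom.negMatrixᵀ *ᵥ c) t := by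
    rw [f.stdHom.pos_eq, map_add, dotH_mulVec, dotH_transposeH, dotH_mulVec, transpose_transpose]
    simp only [map_add, map_zsmul, smul_add]
    abel
  have hlam : (∀ v ∈ f.stdHom.neg.range, v ⬝ᵥ c = 0) ↔ f.stdHom.negMatrixᵀ *ᵥ c = 0 := by
    rw [mulVec_transpose, ← dotProduct_eq_zero_iff]
    simp only [AddMonoidHom.mem_range, forall_exists_index, forall_apply_eq_imp_iff,
      f.stdHom.neg_eq_mulVec, dotProduct_comm _ c, dotProduct_mulVec]
  rw [hlam, and_congr_right_iff]
  intro hc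
  rw [neg_smul, ← add_eq_zero_iff_eq_neg, ← forall_dotH_eq_zero_iff]
  refine ⟨fun h b => ?_, ?_⟩
  · simpa [hmu, hc] using h _ ⟨(b, 0), rfl⟩
  · rintro h _ ⟨⟨b, t⟩, rfl⟩
    rw [hmu, h, hc, dotH_zero_left, smul_zero, add_zero]

end StdWallCoordinates

section Iso

variable {H : Type} [AddCommGroup H] {P : FormParameter H}

noncomputable def WallIso.ofBijective {M N : WallForm P} (φ : WallHom M N)
    (hneg : Function.Bijective φ.hom.neg) (hpos : Function.Bijective φ.hom.pos) : WallIso M N :=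
  let en := AddEquiv.ofBijective φ.hom.neg hneg
  let ep := AddEquiv.ofBijective φ.hom.pos hpos
  { toHom := φ
    invHom :=
      { hom :=
          { neg := en.symm.toAddMonoidHom
            pos := ep.symm.toAddMonoidHom
            comm := fun x h => ep.symm_apply_eq.mpr <| by
              simp [ep, en, φ.hom.comm] }
        isWall := by
          have hn (x : N.carrier.Neg) : φ.hom.neg (en.symm x) = x := en.apply_symm_apply x
          have hp (y : N.carrier.Pos) : φ.hom.pos (ep.symm y) = y := ep.apply_symm_apply y
          refine ⟨fun x y => ?_, fun y y' => ?_, fun x => ?_, fun y => ?_⟩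
          · rw [← φ.isWall.1]; exact congr_arg₂ (fun a b => N.str.lam a b) (hn x) (hp y)
          · rw [← φ.isWall.2.1]; exact congr_arg₂ (fun a b => N.str.mu a b) (hp y) (hp y')
          · rw [← φ.isWall.2.2.1]; exact congr_arg N.str.alphaNeg (hn x)
          · rw [← φ.isWall.2.2.2]; exact congr_arg N.str.alphaPos (hp y) }
    left_neg := en.symm_apply_apply
    right_neg := en.apply_symm_apply
    left_pos := ep.symm_apply_apply
    right_pos := ep.apply_symm_apply }

end Iso

section PerpBasis

variable {H : Type} [AddCommGroup H] [AddGroup.FG H] {P : FormParameter H} {k n g : ℕ}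
  (f : WallHom (stdWall P k) (stdWall P n)) {C D : Matrix (Fin n) (Fin g) ℤ}

/-- The correction of the `H`-part that makes `(C b, θ b)` `μ`-orthogonal to the image of `f`. -/
def WallHom.perpCorrection (C : Matrix (Fin n) (Fin g) ℤ) : (Fin g → ℤ) →+ (Fin n → H) :=
  f.stdHom.negMatrix.mulVecH.comp
    ((-P.eps) • f.stdHom.posH.transposeH.comp C.mulVecLin.toAddMonoidHom)

theorem WallHom.perpCorrection_apply (b : Fin g → ℤ) :
    f.perpCorrection C b =
      f.stdHom.negMatrix.mulVecH ((-P.eps) • f.stdHom.posH.transposeH (C *ᵥ b)) := rfl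

theorem WallHom.dotH_perpCorrection_add
    (hc : IsComplementPair f.stdHom.negMatrix f.stdHom.posMatrix C D)
    (v b : Fin g → ℤ) (t : Fin g → H) :
    dotH (C *ᵥ v) (f.perpCorrection C b + D.mulVecH t) = dotH v t := by
  rw [map_add, dotH_mulVec, dotH_mulVec, perpCorrection_apply, mulVecH_mulVecH, mulVecH_mulVecH,
    hc.symm.DB, hc.symm.DC, zero_mulVecH, one_mulVecH, map_zero, zero_add]

theorem WallHom.stdToPerp_neg_mem
    (hc : IsComplementPair f.stdHom.negMatrix f.stdHom.posMatrix C D) (x : Fin g → ℤ) :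
    D *ᵥ x ∈ (f.hom.rangeSub.perp (stdWall P n).str).neg := by
  rw [f.mem_perp_neg, mulVec_mulVec, hc.symm.AC, zero_mulVec]

theorem WallHom.stdToPerp_pos_mem
    (hc : IsComplementPair f.stdHom.negMatrix f.stdHom.posMatrix C D)
    (b : Fin g → ℤ) (t : Fin g → H) :
    ((C *ᵥ b, f.perpCorrection C b + D.mulVecH t) : (Fin n → ℤ) × (Fin n → H)) ∈
      (f.hom.rangeSub.perp (stdWall P n).str).pos := by
  rw [f.mem_perp_pos, mulVec_mulVec, hc.AC, zero_mulVec, map_add, perpCorrection_apply,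
    mulVecH_mulVecH, mulVecH_mulVecH, hc.symm.AB, hc.symm.AC, one_mulVecH, zero_mulVecH, add_zero]
  exact ⟨rfl, rfl⟩

def WallHom.stdToPerp (hc : IsComplementPair f.stdHom.negMatrix f.stdHom.posMatrix C D) :
    WallHom (stdWall P g) (f.hom.rangeSub.perp (stdWall P n).str).toWall where
  hom :=
    { neg := D.mulVecLin.toAddMonoidHom.codRestrict _ (f.stdToPerp_neg_mem hc)
      pos := AddMonoidHom.codRestrict
        ((C.mulVecLin.toAddMonoidHom.comp (AddMonoidHom.fst _ _)).prod
          ((f.perpCorrection C).comp (AddMonoidHom.fst _ (Fin g → H)) +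
            D.mulVecH.comp (AddMonoidHom.snd (Fin g → ℤ) (Fin g → H))))
        _ fun y => f.stdToPerp_pos_mem hc y.1 y.2
      comm := fun (x : Fin g → ℤ) h => Subtype.ext <| Prod.ext (mulVec_zero C) <| by
        change f.perpCorrection C 0 + D.mulVecH (fun j => x j • h) = fun i => (D *ᵥ x) i • h
        rw [map_zero, zero_add, mulVecH_smul_const] }
  isWall := by
    refine ⟨fun (x : Fin g → ℤ) (y : (Fin g → ℤ) × (Fin g → H)) => ?_,
      fun (y y' : (Fin g → ℤ) × (Fin g → H)) => ?_, fun _ => rfl,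
      fun (y : (Fin g → ℤ) × (Fin g → H)) => ?_⟩
    · change (D *ᵥ x) ⬝ᵥ (C *ᵥ y.1) = x ⬝ᵥ y.1
      rw [dotProduct_comm, dotProduct_mulVec, ← mulVec_transpose, mulVec_mulVec, hc.DC,
        one_mulVec, dotProduct_comm]
    · change dotH (C *ᵥ y'.1) (f.perpCorrection C y.1 + D.mulVecH y.2) +
          P.eps • dotH (C *ᵥ y.1) (f.perpCorrection C y'.1 + D.mulVecH y'.2) =
        dotH y'.1 y.2 + P.eps • dotH y.1 y'.2
      rw [f.dotH_perpCorrection_add hc, f.dotH_perpCorrection_add hc]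
    · change P.bd (dotH (C *ᵥ y.1) (f.perpCorrection C y.1 + D.mulVecH y.2)) =
        P.bd (dotH y.1 y.2)
      rw [f.dotH_perpCorrection_add hc]

theorem WallHom.stdToPerp_neg_bijective
    (hc : IsComplementPair f.stdHom.negMatrix f.stdHom.posMatrix C D) :
    Function.Bijective (f.stdToPerp hc).hom.neg := by
  refine Function.bijective_iff_has_inverse.mpr
    ⟨fun v => Cᵀ *ᵥ v.1, fun (x : Fin g → ℤ) => ?_, fun ⟨(v : Fin n → ℤ), hv⟩ => ?_⟩
  · change Cᵀ *ᵥ (D *ᵥ x) = x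
    rw [mulVec_mulVec, hc.symm.DC, one_mulVec]
  · have hBv := (f.mem_perp_neg v).mp hv
    exact Subtype.ext (hc.symm.mulVec_mulVec_eq_self hBv)

theorem WallHom.stdToPerp_pos_bijective
    (hc : IsComplementPair f.stdHom.negMatrix f.stdHom.posMatrix C D) :
    Function.Bijective (f.stdToPerp hc).hom.pos := by
  refine Function.bijective_iff_has_inverse.mpr ⟨fun y => (Dᵀ *ᵥ y.1.1, Cᵀ.mulVecH y.1.2),
    fun ((b, t) : (Fin g → ℤ) × (Fin g → H)) => ?_,
    fun ⟨((c, s) : (Fin n → ℤ) × (Fin n → H)), hy⟩ => ?_⟩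
  · change (Dᵀ *ᵥ (C *ᵥ b), Cᵀ.mulVecH (f.perpCorrection C b + D.mulVecH t)) = (b, t)
    rw [mulVec_mulVec, hc.DC, one_mulVec, map_add, perpCorrection_apply, mulVecH_mulVecH,
      mulVecH_mulVecH, hc.symm.DB, hc.symm.DC, zero_mulVecH, one_mulVecH, zero_add]
  · obtain ⟨hAc, hBs⟩ := (f.mem_perp_pos c s).mp hy
    have hCDc : C *ᵥ (Dᵀ *ᵥ c) = c := hc.mulVec_mulVec_eq_self hAc
    refine Subtype.ext (Prod.ext hCDc ?_ : (C *ᵥ (Dᵀ *ᵥ c),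
      f.perpCorrection C (Dᵀ *ᵥ c) + D.mulVecH (Cᵀ.mulVecH s)) = (c, s))
    rw [perpCorrection_apply, hCDc, ← hBs, mulVecH_mulVecH, mulVecH_mulVecH, ← add_mulVecH,
      hc.symm.sum, one_mulVecH]

end PerpBasis

theorem statement_9_general {H : Type} [AddCommGroup H] [AddGroup.FG H]
    (P : FormParameter H) (k g : ℕ)
    (f : WallHom (stdWall P k) (stdWall P (g + k))) :
    Nonempty (WallIso (stdWall P g)
      (f.hom.rangeSub.perp (stdWall P (g + k)).str).toWall) := by
  obtain ⟨C, D, hc⟩ :=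
    exists_isComplementPair (g := g) (by simp) _ _ f.negMatrix_transpose_mul_posMatrix
  exact ⟨WallIso.ofBijective (f.stdToPerp hc) (f.stdToPerp_neg_bijective hc)
    (f.stdToPerp_pos_bijective hc)⟩

/-- For positive integers `k, g` and a morphism
`f : W^k → W^{g+k}` of Wall forms, there is an isomorphism
`W^g ≅ f(W^k)^⊥`. -/
theorem statement_9 {H : Type} [AddCommGroup H] [AddGroup.FG H]
    (P : FormParameter H) (k g : ℕ) (hk : 0 < k) (hg : 0 < g)
    (f : WallHom (stdWall P k) (stdWall P (g + k))) :
    Nonempty (WallIso (stdWall P g)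
      (f.hom.rangeSub.perp (stdWall P (g + k)).str).toWall) :=
  statement_9_general P k g f
end

section
/- Let g be an integer with d(H) ≤ g − 1, and write d = d(H). Let y ∈ W^g₊. Then there exists a Wall form automorphism Φ : W^g → W^g such that Φ₊⁻¹(y) lies in the subgroup (W^{d+1} ⊕ 0)₊ ≤ W^g₊ corresponding to the first d+1 direct summands of W^g = W^{⊕g}. -/
/-!
Write `y = (p, q)` with `p ∈ ℤ^g`, `q ∈ H^g`, pick a surjection `φ : ℤ^d → H`, lifts `q̃ⱼ` of
the `qⱼ`, and let `L : ℤ^g → ℤ^d`, `x ↦ ∑ xⱼ q̃ⱼ`. The image of `L` is free, so `ker L` has a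
complement, of rank at most `d`; and the `ker L`-component of `p` is a multiple of a vector in
some basis of `ker L`. Together these give a basis `v` of `ℤ^g` whose vectors `vᵢ`, `i > d`,
lie in `ker L` and carry no `v`-coordinate of `p`.
Any basis `v` of `ℤ^g` induces the automorphism of `W^g` sending `bᵢ ↦ vᵢ` and the `aᵢ` to the
dual basis; its inverse sends `y` to (`v`-coordinates of `p`, `(φ (L vᵢ))ᵢ`).
-/

open Module

theorem LinearMap.exists_isCompl_ker {R M N : Type*} [Ring R] [AddCommGroup M] [Module R M]
    [AddCommGroup N] [Module R N] (L : M →ₗ[R] N) [Projective R (LinearMap.range L)] :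
    ∃ C : Submodule R M, IsCompl C (LinearMap.ker L) := by
  obtain ⟨s, hs⟩ := Module.projective_lifting_property L.rangeRestrict LinearMap.id
    L.surjective_rangeRestrict
  have hπ : IsIdempotentElem (s ∘ₗ L.rangeRestrict) := by
    rw [IsIdempotentElem, Module.End.mul_eq_comp, LinearMap.comp_assoc,
      ← LinearMap.comp_assoc L.rangeRestrict, hs, LinearMap.id_comp]
  have hker : LinearMap.ker (s ∘ₗ L.rangeRestrict) = LinearMap.ker L := by
    rw [LinearMap.ker_comp_of_ker_eq_bot _ (LinearMap.ker_eq_bot_of_inverse hs),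
      LinearMap.ker_rangeRestrict]
  exact ⟨_, hker ▸ IsIdempotentElem.isCompl hπ⟩

section PID

variable {R M N : Type*} [CommRing R] [IsDomain R] [IsPrincipalIdealRing R]
  [AddCommGroup M] [Module R M] [AddCommGroup N] [Module R N]

theorem Module.Basis.exists_repr_eq_zero_of_ne {ι : Type*} [Finite ι] [DecidableEq ι]
    (b : Basis ι R M) (x : M) (i₀ : ι) : ∃ w : Basis ι R M, ∀ i ≠ i₀, w.repr x i = 0 := by
  obtain ⟨n, snf⟩ := (Submodule.span R {x}).smithNormalForm b
  have hn : n ≤ 1 := by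
    have := finrank_span_le_card (R := R) {x}
    rwa [finrank_eq_card_basis snf.bN, Fintype.card_fin, Set.toFinset_singleton,
      Finset.card_singleton] at this
  obtain ⟨j₀, hj₀⟩ : ∃ j₀, Set.range snf.f ⊆ {j₀} := by
    rcases n with _ | _ | n
    · exact ⟨i₀, by simp⟩
    · exact ⟨snf.f 0, by rintro _ ⟨j, rfl⟩; rw [Fin.fin_one_eq_zero j]; rfl⟩
    · omega
  refine ⟨snf.bM.reindex (Equiv.swap j₀ i₀), fun i hi => ?_⟩
  rw [Basis.repr_reindex_apply]
  refine snf.repr_eq_zero_of_notMem_range ⟨x, Submodule.mem_span_singleton_self x⟩ fun h => hi ?_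
  rw [Equiv.symm_swap] at h
  rw [Equiv.swap_apply_eq_iff.mp (hj₀ h), Equiv.swap_apply_left]

variable [Free R M] [Module.Finite R M] [Free R N] [Module.Finite R N]

theorem LinearMap.exists_basis_apply_eq_zero_of_finrank_lt (L : M →ₗ[R] N) (x : M) {g : ℕ}
    (hg : finrank R M = g) (hN : finrank R N < g) :
    ∃ v : Basis (Fin g) R M, ∀ i : Fin g, finrank R N < i → L (v i) = 0 ∧ v.repr x i = 0 := by
  obtain ⟨C, hC⟩ := L.exists_isCompl_ker
  let e := Submodule.prodEquivOfIsCompl C (LinearMap.ker L) hC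
  have hCN : finrank R C ≤ finrank R N := by
    refine LinearMap.finrank_le_finrank_of_injective (f := L ∘ₗ C.subtype) ?_
    rw [← LinearMap.ker_eq_bot, LinearMap.ker_comp, ← Submodule.disjoint_iff_comap_eq_bot]
    exact hC.disjoint
  have hrm : finrank R C + finrank R (LinearMap.ker L) = g := by
    rw [← hg, finrank_eq_card_basis (((finBasis R C).prod (finBasis R (LinearMap.ker L))).map e)]
    simp
  obtain ⟨w, hw⟩ := (finBasis R (LinearMap.ker L)).exists_repr_eq_zero_of_ne (e.symm x).2
    ⟨0, by omega⟩
  let E := finSumFinEquiv.trans (finCongr hrm)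
  refine ⟨(((finBasis R C).prod w).map e).reindex E, fun i hi => ?_⟩
  rcases hs : E.symm i with j | k
  · have hij : (i : ℕ) = j := by rw [← E.apply_symm_apply i, hs]; rfl
    have := j.2
    omega
  · have hik : (i : ℕ) = finrank R C + k := by rw [← E.apply_symm_apply i, hs]; rfl
    rw [Basis.reindex_apply, Basis.repr_reindex_apply, hs, Basis.map_apply, Basis.map_repr]
    refine ⟨by simp [e], ?_⟩
    simp only [LinearEquiv.trans_apply, Basis.prod_repr_inr]
    exact hw k (Fin.ne_of_val_ne (by simp; omega))

end PID

namespace Matrix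

variable {H : Type} [AddCommGroup H] {l m n : Type*} [Fintype n]

def intMulVec (A : Matrix m n ℤ) : (n → H) →+ (m → H) where
  toFun w i := ∑ j, A i j • w j
  map_zero' := by ext; simp
  map_add' w w' := by ext; simp [Finset.sum_add_distrib]

theorem intMulVec_apply (A : Matrix m n ℤ) (w : n → H) (i : m) :
    A.intMulVec w i = ∑ j, A i j • w j := rfl

theorem intMulVec_intMulVec [Fintype m] (A : Matrix l m ℤ) (B : Matrix m n ℤ) (w : n → H) :
    A.intMulVec (B.intMulVec w) = (A * B).intMulVec w := by
  ext i
  simp only [intMulVec_apply, mul_apply, Finset.smul_sum, Finset.sum_smul, smul_smul]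
  exact Finset.sum_comm

theorem one_intMulVec [DecidableEq n] (w : n → H) : (1 : Matrix n n ℤ).intMulVec w = w := by
  ext i
  simp [intMulVec_apply, one_apply]

theorem intMulVec_smul_const (A : Matrix m n ℤ) (x : n → ℤ) (h : H) :
    A.intMulVec (fun j => x j • h) = fun i => (A *ᵥ x) i • h := by
  ext i
  simp only [intMulVec_apply, mulVec, dotProduct, Finset.sum_smul, smul_smul]

theorem sum_smul_intMulVec [Fintype m] (c : m → ℤ) (A : Matrix m n ℤ) (w : n → H) :
    ∑ i, c i • A.intMulVec w i = ∑ j, (c ᵥ* A) j • w j := by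
  simp only [intMulVec_apply, vecMul, dotProduct, Finset.smul_sum, Finset.sum_smul, smul_smul]
  exact Finset.sum_comm

theorem sum_vecMul_smul_intMulVec_of_mul_eq_one [Fintype m] [DecidableEq n] {A : Matrix m n ℤ}
    {B : Matrix n m ℤ} (hBA : B * A = 1) (c : n → ℤ) (w : n → H) :
    ∑ i, (c ᵥ* B) i • A.intMulVec w i = ∑ i, c i • w i := by
  rw [sum_smul_intMulVec, vecMul_vecMul, hBA, vecMul_one]

end Matrix

section StdWallAut

open Matrix

variable {H : Type} [AddCommGroup H] [AddGroup.FG H] (P : FormParameter H) {g : ℕ}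

def stdWallHomOfMatrix (A B : Matrix (Fin g) (Fin g) ℤ) (hBA : B * A = 1) :
    WallHom (stdWall P g) (stdWall P g) where
  hom :=
    { neg := A.mulVecLin.toAddMonoidHom
      pos := B.vecMulLinear.toAddMonoidHom.prodMap A.intMulVec
      comm x h := Prod.ext (zero_vecMul B) (A.intMulVec_smul_const x h) }
  isWall := by
    refine ⟨fun (x : Fin g → ℤ) (w : (Fin g → ℤ) × (Fin g → H)) => ?_,
      fun (w w' : (Fin g → ℤ) × (Fin g → H)) => ?_, fun _ => rfl,
      fun (w : (Fin g → ℤ) × (Fin g → H)) => ?_⟩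
    · show (A *ᵥ x) ⬝ᵥ (w.1 ᵥ* B) = x ⬝ᵥ w.1
      rw [dotProduct_comm, dotProduct_mulVec, vecMul_vecMul, hBA, vecMul_one, dotProduct_comm]
    · show ∑ i, (w'.1 ᵥ* B) i • A.intMulVec w.2 i + P.eps • ∑ i, (w.1 ᵥ* B) i • A.intMulVec w'.2 i
        = ∑ i, w'.1 i • w.2 i + P.eps • ∑ i, w.1 i • w'.2 i
      rw [sum_vecMul_smul_intMulVec_of_mul_eq_one hBA,
        sum_vecMul_smul_intMulVec_of_mul_eq_one hBA]
    · show P.bd (∑ i, (w.1 ᵥ* B) i • A.intMulVec w.2 i) = P.bd (∑ i, w.1 i • w.2 i)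
      rw [sum_vecMul_smul_intMulVec_of_mul_eq_one hBA]

def stdWallIsoOfMatrix (A B : Matrix (Fin g) (Fin g) ℤ) (hAB : A * B = 1) (hBA : B * A = 1) :
    WallIso (stdWall P g) (stdWall P g) where
  toHom := stdWallHomOfMatrix P A B hBA
  invHom := stdWallHomOfMatrix P B A hAB
  left_neg := fun (x : Fin g → ℤ) => by
    show B *ᵥ (A *ᵥ x) = x
    rw [mulVec_mulVec, hBA, one_mulVec]
  right_neg := fun (x : Fin g → ℤ) => by
    show A *ᵥ (B *ᵥ x) = x
    rw [mulVec_mulVec, hAB, one_mulVec]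
  left_pos := fun (w : (Fin g → ℤ) × (Fin g → H)) => by
    show ((w.1 ᵥ* B) ᵥ* A, B.intMulVec (A.intMulVec w.2)) = w
    rw [vecMul_vecMul, hBA, vecMul_one, intMulVec_intMulVec, hBA, one_intMulVec]
  right_pos := fun (w : (Fin g → ℤ) × (Fin g → H)) => by
    show ((w.1 ᵥ* A) ᵥ* B, A.intMulVec (B.intMulVec w.2)) = w
    rw [vecMul_vecMul, hAB, vecMul_one, intMulVec_intMulVec, hAB, one_intMulVec]

noncomputable def stdWallIsoOfBasis (v : Basis (Fin g) ℤ (Fin g → ℤ)) :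
    WallIso (stdWall P g) (stdWall P g) :=
  stdWallIsoOfMatrix P (v.toMatrix (Pi.basisFun ℤ (Fin g)))ᵀ ((Pi.basisFun ℤ (Fin g)).toMatrix v)ᵀ
    (by rw [← transpose_mul, Basis.toMatrix_mul_toMatrix_flip, transpose_one])
    (by rw [← transpose_mul, Basis.toMatrix_mul_toMatrix_flip, transpose_one])

theorem stdWallIsoOfBasis_invHom_pos (v : Basis (Fin g) ℤ (Fin g → ℤ))
    (y : (Fin g → ℤ) × (Fin g → H)) :
    (stdWallIsoOfBasis P v).invHom.hom.pos y = (⇑(v.repr y.1), fun i => ∑ j, v i j • y.2 j) := by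
  refine Prod.ext ?_ (funext fun i => ?_)
  · show y.1 ᵥ* (v.toMatrix (Pi.basisFun ℤ (Fin g)))ᵀ = v.repr y.1
    rw [vecMul_transpose]
    have h := (Pi.basisFun ℤ (Fin g)).toMatrix_mulVec_repr v y.1
    rwa [show ⇑((Pi.basisFun ℤ (Fin g)).repr y.1) = y.1 from
      funext (Pi.basisFun_repr ℤ (Fin g) y.1)] at h
  · show ∑ j, ((Pi.basisFun ℤ (Fin g)).toMatrix v)ᵀ i j • y.2 j = _
    simp [Basis.toMatrix_apply]

end StdWallAut

theorem exists_surjective_fin_dlen (H : Type) [AddCommGroup H] [AddGroup.FG H] :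
    ∃ φ : (Fin (dlen H) → ℤ) →+ H, Function.Surjective φ := by
  refine Nat.sInf_mem (s := {k | ∃ φ : (Fin k → ℤ) →+ H, Function.Surjective φ}) ?_
  have : Module.Finite ℤ H := Module.Finite.iff_addGroup_fg.mpr ‹_›
  obtain ⟨n, f, hf⟩ := Module.Finite.exists_fin' ℤ H
  exact ⟨n, f.toAddMonoidHom, hf⟩

/-- If `d(H) ≤ g - 1` and `y ∈ W^g₊`, there is an
automorphism `Φ` of `W^g` with `Φ₊⁻¹(y)` contained in the subgroup
corresponding to the first `d(H) + 1` direct summands of `W^g`. -/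
theorem statement_11 {H : Type} [AddCommGroup H] [AddGroup.FG H]
    (P : FormParameter H) (g : ℕ) (hg : dlen H + 1 ≤ g)
    (y : (stdWall P g).carrier.Pos) :
    ∃ Φ : WallIso (stdWall P g) (stdWall P g),
      ∀ i : Fin g, dlen H + 1 ≤ (i : ℕ) →
        (Φ.invHom.hom.pos y).1 i = 0 ∧ (Φ.invHom.hom.pos y).2 i = 0 := by
  obtain ⟨φ, hφ⟩ := exists_surjective_fin_dlen H
  choose q hq using fun j => hφ (y.2 j)
  obtain ⟨v, hv⟩ := (Fintype.linearCombination ℤ q).exists_basis_apply_eq_zero_of_finrank_lt y.1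
    (finrank_fin_fun ℤ) (by rw [finrank_fin_fun]; omega)
  refine ⟨stdWallIsoOfBasis P v, fun i hi => ?_⟩
  obtain ⟨hvq, hvy⟩ := hv i (by rw [finrank_fin_fun]; omega)
  rw [stdWallIsoOfBasis_invHom_pos P v y]
  refine ⟨hvy, ?_⟩
  calc ∑ j, v i j • y.2 j = φ (Fintype.linearCombination ℤ q (v i)) := by
        simp only [Fintype.linearCombination_apply, map_sum, map_zsmul, hq]
    _ = 0 := by rw [hvq, map_zero]
end

section
/- Let g be a positive integer and let x ∈ W^g₋. Then there exists a Wall form automorphism Φ : W^g → W^g such that Φ₋⁻¹(x) lies in the subgroup (W¹ ⊕ 0)₋ ≤ W^g₋ corresponding to the first direct summand of W^g = W^{⊕g}. -/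
/-! By Smith normal form, every `x ∈ ℤ^g` is a multiple of a vector of some basis of `ℤ^g`,
so some `A ∈ GL_g(ℤ)` moves `x` into `ℤ·a₁`. Every `A ∈ GL_g(ℤ)` acts on `W^g` by Wall form
automorphisms: by `A` on `W^g₋ = ℤ^g`, and on `W^g₊ = ℤ^g × H^g` by the contragredient `(A⁻¹)ᵀ`
on the first factor and by `A` on the second. Indeed `λ`, `μ` and `α₊` are built from the
pairings `ℤ^g × ℤ^g → ℤ` and `ℤ^g × H^g → H`, which are invariant under applying `(A⁻¹)ᵀ` to the
`b`-coordinates and `A` to the other argument. -/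

theorem Module.Basis.exists_basis_repr_eq_zero_of_ne {R M ι : Type*} [CommRing R] [IsDomain R]
    [IsPrincipalIdealRing R] [AddCommGroup M] [Module R M] [Finite ι]
    (b : Module.Basis ι R M) (x : M) (i₀ : ι) :
    ∃ b' : Module.Basis ι R M, ∀ i ≠ i₀, b'.repr x i = 0 := by
  classical
  obtain ⟨n, snf⟩ := (R ∙ x).smithNormalForm b
  have hn : n ≤ 1 := by
    have h1 := finrank_span_le_card (R := R) ({x} : Set M)
    simp_all [Module.finrank_eq_card_basis snf.bN]
  obtain ⟨j, hj⟩ : ∃ j, Set.range snf.f ⊆ {j} := by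
    rcases Nat.le_one_iff_eq_zero_or_eq_one.mp hn with rfl | rfl
    · exact ⟨i₀, by simp [Set.range_eq_empty]⟩
    · exact ⟨snf.f 0, by rintro _ ⟨k, rfl⟩; simp [Subsingleton.elim k 0]⟩
  refine ⟨snf.bM.reindex (Equiv.swap j i₀), fun i hi => ?_⟩
  rw [Module.Basis.repr_reindex_apply]
  refine snf.repr_eq_zero_of_notMem_range ⟨x, Submodule.mem_span_singleton_self x⟩ fun hmem => ?_
  exact hi ((Equiv.swap_apply_eq_iff.mp (hj hmem)).trans (Equiv.swap_apply_left j i₀))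

open Matrix

theorem Matrix.GeneralLinearGroup.exists_mulVec_eq_linearEquiv {n R : Type*} [Fintype n]
    [DecidableEq n] [CommRing R] (e : (n → R) ≃ₗ[R] (n → R)) :
    ∃ A : GL n R, ∀ v, (A : Matrix n n R) *ᵥ v = e v := by
  refine ⟨toLin.symm (LinearMap.GeneralLinearGroup.ofLinearEquiv e), fun v => ?_⟩
  rw [← mulVecLin_apply, ← coe_toLin, MulEquiv.apply_symm_apply]
  rfl

namespace Matrix

variable {n H : Type*} [Fintype n] [AddCommGroup H]

def zmulVec (A : Matrix n n ℤ) : (n → H) →+ (n → H) where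
  toFun w i := ∑ j, A i j • w j
  map_zero' := by ext; simp
  map_add' w w' := by ext; simp [smul_add, Finset.sum_add_distrib]

theorem zmulVec_apply (A : Matrix n n ℤ) (w : n → H) (i : n) :
    A.zmulVec w i = ∑ j, A i j • w j := rfl

theorem zmulVec_zmulVec (A B : Matrix n n ℤ) (w : n → H) :
    A.zmulVec (B.zmulVec w) = (A * B).zmulVec w := by
  ext i
  simp only [zmulVec_apply, Finset.smul_sum, smul_smul, mul_apply, Finset.sum_smul]
  exact Finset.sum_comm

theorem one_zmulVec [DecidableEq n] (w : n → H) : (1 : Matrix n n ℤ).zmulVec w = w := by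
  ext i
  simp [zmulVec_apply, one_apply]

theorem sum_smul_zmulVec (A : Matrix n n ℤ) (v : n → ℤ) (w : n → H) :
    ∑ i, v i • A.zmulVec w i = ∑ j, (Aᵀ *ᵥ v) j • w j := by
  simp only [zmulVec_apply, Finset.smul_sum, smul_smul, mulVec, dotProduct, transpose_apply,
    Finset.sum_smul]
  rw [Finset.sum_comm]
  exact Finset.sum_congr rfl fun j _ => Finset.sum_congr rfl fun i _ => by rw [mul_comm]

theorem sum_smul_zmulVec_of_mul_eq_one [DecidableEq n] {A B : Matrix n n ℤ} (hBA : B * A = 1)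
    (v : n → ℤ) (w : n → H) :
    ∑ i, (Bᵀ *ᵥ v) i • A.zmulVec w i = ∑ i, v i • w i := by
  rw [sum_smul_zmulVec, mulVec_mulVec, ← transpose_mul, hBA, transpose_one, one_mulVec]

end Matrix

section GLAction

variable {H : Type} [AddCommGroup H] [AddGroup.FG H] {P : FormParameter H} {g : ℕ}

def stdWallHomOfGL (A : GL (Fin g) ℤ) : WallHom (stdWall P g) (stdWall P g) where
  hom :=
    { neg := (mulVecLin (A : Matrix (Fin g) (Fin g) ℤ)).toAddMonoidHom
      pos := (mulVecLin (↑A⁻¹ : Matrix (Fin g) (Fin g) ℤ)ᵀ).toAddMonoidHom.prodMap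
        (zmulVec (A : Matrix (Fin g) (Fin g) ℤ))
      comm := fun x h => by
        refine Prod.ext (mulVec_zero (n := Fin g) _) (funext fun i => ?_)
        show ∑ j, A i j • x j • h = (∑ j, A i j * x j) • h
        simp [smul_smul, Finset.sum_smul] }
  isWall := by
    refine ⟨fun (x : Fin g → ℤ) y => ?_, fun y y' => ?_, fun x => rfl, fun y => ?_⟩
    · show (A *ᵥ x) ⬝ᵥ ((↑A⁻¹ : Matrix (Fin g) (Fin g) ℤ)ᵀ *ᵥ y.1) = x ⬝ᵥ y.1
      rw [dotProduct_mulVec, vecMul_transpose, mulVec_mulVec, A.inv_mul, one_mulVec]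
    · show (∑ i, ((↑A⁻¹ : Matrix (Fin g) (Fin g) ℤ)ᵀ *ᵥ y'.1) i • zmulVec (↑A) y.2 i)
            + P.eps • ∑ i, ((↑A⁻¹ : Matrix (Fin g) (Fin g) ℤ)ᵀ *ᵥ y.1) i • zmulVec (↑A) y'.2 i
          = (∑ i, y'.1 i • y.2 i) + P.eps • ∑ i, y.1 i • y'.2 i
      rw [sum_smul_zmulVec_of_mul_eq_one A.inv_mul, sum_smul_zmulVec_of_mul_eq_one A.inv_mul]
    · show P.bd (∑ i, ((↑A⁻¹ : Matrix (Fin g) (Fin g) ℤ)ᵀ *ᵥ y.1) i • zmulVec (↑A) y.2 i)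
          = P.bd (∑ i, y.1 i • y.2 i)
      rw [sum_smul_zmulVec_of_mul_eq_one A.inv_mul]

theorem stdWallHomOfGL_comp_neg (A B : GL (Fin g) ℤ) (x : (stdWall P g).carrier.Neg) :
    (stdWallHomOfGL (P := P) A).hom.neg ((stdWallHomOfGL (P := P) B).hom.neg x)
      = (stdWallHomOfGL (P := P) (A * B)).hom.neg x :=
  mulVec_mulVec x (A : Matrix (Fin g) (Fin g) ℤ) B

theorem stdWallHomOfGL_comp_pos (A B : GL (Fin g) ℤ) (y : (stdWall P g).carrier.Pos) :
    (stdWallHomOfGL (P := P) A).hom.pos ((stdWallHomOfGL (P := P) B).hom.pos y)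
      = (stdWallHomOfGL (P := P) (A * B)).hom.pos y := by
  refine Prod.ext ?_ (zmulVec_zmulVec _ _ y.2)
  show (↑A⁻¹ : Matrix (Fin g) (Fin g) ℤ)ᵀ *ᵥ ((↑B⁻¹ : Matrix (Fin g) (Fin g) ℤ)ᵀ *ᵥ y.1)
    = (↑(A * B)⁻¹ : Matrix (Fin g) (Fin g) ℤ)ᵀ *ᵥ y.1
  rw [mulVec_mulVec, ← transpose_mul, _root_.mul_inv_rev, Units.val_mul]

theorem stdWallHomOfGL_one_neg (x : (stdWall P g).carrier.Neg) :
    (stdWallHomOfGL (P := P) 1).hom.neg x = x :=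
  one_mulVec x

theorem stdWallHomOfGL_one_pos (y : (stdWall P g).carrier.Pos) :
    (stdWallHomOfGL (P := P) 1).hom.pos y = y := by
  refine Prod.ext ?_ (one_zmulVec y.2)
  show (↑(1 : GL (Fin g) ℤ)⁻¹ : Matrix (Fin g) (Fin g) ℤ)ᵀ *ᵥ y.1 = y.1
  rw [inv_one, Units.val_one, transpose_one, one_mulVec]

def stdWallAutOfGL (A : GL (Fin g) ℤ) : WallIso (stdWall P g) (stdWall P g) where
  toHom := stdWallHomOfGL A
  invHom := stdWallHomOfGL A⁻¹
  left_neg x := by rw [stdWallHomOfGL_comp_neg, inv_mul_cancel, stdWallHomOfGL_one_neg]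
  right_neg x := by rw [stdWallHomOfGL_comp_neg, mul_inv_cancel, stdWallHomOfGL_one_neg]
  left_pos y := by rw [stdWallHomOfGL_comp_pos, inv_mul_cancel, stdWallHomOfGL_one_pos]
  right_pos y := by rw [stdWallHomOfGL_comp_pos, mul_inv_cancel, stdWallHomOfGL_one_pos]

end GLAction

/-- For `x ∈ W^g₋` there is an automorphism `Φ` of `W^g`
with `Φ₋⁻¹(x)` contained in the subgroup corresponding to the first direct
summand of `W^g`. -/
theorem statement_12 {H : Type} [AddCommGroup H] [AddGroup.FG H]
    (P : FormParameter H) (g : ℕ) (hg : 0 < g)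
    (x : (stdWall P g).carrier.Neg) :
    ∃ Φ : WallIso (stdWall P g) (stdWall P g),
      ∀ i : Fin g, 1 ≤ (i : ℕ) → Φ.invHom.hom.neg x i = 0 := by
  obtain ⟨b, hb⟩ :=
    (Pi.basisFun ℤ (Fin g)).exists_basis_repr_eq_zero_of_ne (x : Fin g → ℤ) ⟨0, hg⟩
  obtain ⟨A, hA⟩ := GeneralLinearGroup.exists_mulVec_eq_linearEquiv b.equivFun
  refine ⟨stdWallAutOfGL A⁻¹, fun i hi => ?_⟩
  show ((↑A⁻¹⁻¹ : Matrix (Fin g) (Fin g) ℤ) *ᵥ x) i = 0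
  rw [inv_inv]
  exact (congrFun (hA x) i).trans (hb i (Fin.ne_of_val_ne (Nat.one_le_iff_ne_zero.mp hi)))
end

section
/- Let M be a Wall form with r(M) ≥ g and let φ : M → P⁰ be an H-map. Then the kernel of φ (a sub-Wall form of M with components ker φ₋ and ker φ₊) satisfies r(ker φ) ≥ g − 1. Similarly, if r̄(M) ≥ g, then r̄(ker φ) ≥ g − 1. -/
/-! The composite `W^g → M → P⁰` vanishes on the `τ`-part of `W^g₊`, so it is a linear form `c`
on the `b`-coordinates `ℤ^g`. Over a PID, `ker c` is a direct summand of rank at least `g - 1`,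
so there are integer matrices `X, U` with `X * U = 1` and the columns of `U` in `ker c`;
`aᵢ ↦ Xᵀ aᵢ`, `bᵢ ↦ U bᵢ` is then a morphism `W^{g-1} → W^g` landing in the kernel.
For the stable rank, apply this to `φ ∘ pr₁ : M ⊕ W^j → P⁰`, whose kernel is `ker φ ⊕ W^j`. -/

section LinearAlgebra

open Module

variable {R M : Type*} [CommRing R] [IsDomain R] [AddCommGroup M] [Module R M]

theorem LinearMap.finrank_sub_one_le_finrank_ker [Module.Finite R M] (c : M →ₗ[R] R) :
    finrank R M - 1 ≤ finrank R (LinearMap.ker c) := by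
  have h := (LinearMap.ker c).finrank_quotient_add_finrank
  rw [c.quotKerEquivRange.finrank_eq] at h
  have : finrank R (LinearMap.range c) ≤ 1 := by simpa using (LinearMap.range c).finrank_le
  omega

variable [IsPrincipalIdealRing R]

theorem LinearMap.exists_retraction_ker (c : M →ₗ[R] R) :
    ∃ p : M →ₗ[R] LinearMap.ker c, p ∘ₗ (LinearMap.ker c).subtype = LinearMap.id := by
  -- `range c` is an ideal of a PID, hence free, so `c` splits over its range.
  obtain ⟨s, hs⟩ := c.rangeRestrict.exists_rightInverse_of_surjective c.range_rangeRestrict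
  have hcs : ∀ y, c (s y) = y := fun y => congrArg Subtype.val (LinearMap.congr_fun hs y)
  have hmem : ∀ x, x - s (c.rangeRestrict x) ∈ LinearMap.ker c := fun x => by simp [hcs]
  refine ⟨(LinearMap.id - s ∘ₗ c.rangeRestrict).codRestrict _ hmem, ?_⟩
  refine LinearMap.ext fun x => Subtype.ext ?_
  have hx : c.rangeRestrict x = 0 := Subtype.ext x.2
  simp [hx]

theorem LinearMap.exists_pi_retract_in_ker [Module.Free R M] [Module.Finite R M]
    (c : M →ₗ[R] R) {n : ℕ} (hn : n ≤ finrank R M - 1) :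
    ∃ (u : (Fin n → R) →ₗ[R] M) (x : M →ₗ[R] Fin n → R),
      x ∘ₗ u = LinearMap.id ∧ c ∘ₗ u = 0 := by
  obtain ⟨p, hp⟩ := c.exists_retraction_ker
  have hnK : n ≤ finrank R (LinearMap.ker c) := hn.trans c.finrank_sub_one_le_finrank_ker
  let q : LinearMap.ker c →ₗ[R] Fin n → R :=
    LinearMap.funLeft R R (Fin.castLE hnK) ∘ₗ
      (Module.finBasis R (LinearMap.ker c)).equivFun.toLinearMap
  have hq : Function.Surjective q :=
    (LinearMap.funLeft_surjective_of_injective R R _ (Fin.castLE_injective hnK)).comp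
      (Module.finBasis R (LinearMap.ker c)).equivFun.surjective
  obtain ⟨t, ht⟩ := q.exists_rightInverse_of_surjective (LinearMap.range_eq_top.mpr hq)
  refine ⟨(LinearMap.ker c).subtype ∘ₗ t, q ∘ₗ p, ?_, ?_⟩
  · rw [LinearMap.comp_assoc, ← LinearMap.comp_assoc t, hp, LinearMap.id_comp, ht]
  · exact LinearMap.ext fun y => (t y).2

end LinearAlgebra

section StdWallHom

open Matrix

variable {H : Type} [AddCommGroup H]

def Matrix.zsmulVec {m n : Type*} [Fintype n] (A : Matrix m n ℤ) : (n → H) →+ (m → H) where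
  toFun v i := ∑ j, A i j • v j
  map_zero' := by ext; simp
  map_add' v w := by ext; simp [Finset.sum_add_distrib]

theorem Matrix.sum_smul_zsmulVec {m n : Type*} [Fintype m] [Fintype n] (A : Matrix m n ℤ)
    (w : m → ℤ) (v : n → H) : ∑ i, w i • A.zsmulVec v i = ∑ j, (w ᵥ* A) j • v j := by
  simp only [Matrix.zsmulVec, AddMonoidHom.coe_mk, ZeroHom.coe_mk, Finset.smul_sum, smul_smul,
    vecMul, dotProduct, Finset.sum_smul]
  exact Finset.sum_comm

theorem HPairHom.pos_stdPair_eq_pos_fst {g : ℕ} (ψ : HPairHom (stdPair H g) (P0 H))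
    (w : Fin g → ℤ) (v : Fin g → H) : ψ.pos (w, v) = ψ.pos (w, 0) := by
  have hv : ((0 : Fin g → ℤ), v) = ∑ i, (stdPair H g).tau (Pi.single i 1) (v i) := by
    refine Prod.ext (by simp [Prod.fst_sum]) (funext fun l => ?_)
    simp [Prod.snd_sum, Finset.sum_apply, Pi.single_apply]
  have hτ : ∀ x h, ψ.pos ((stdPair H g).tau x h) = 0 := fun x h => ψ.comm x h
  rw [show (w, v) = (w, 0) + ((0 : Fin g → ℤ), v) by simp, map_add, hv, map_sum,
    Finset.sum_eq_zero fun i _ => hτ _ _, add_zero]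

variable [AddGroup.FG H] {P : FormParameter H}

def stdWallHom {k g : ℕ} (X : Matrix (Fin k) (Fin g) ℤ) (U : Matrix (Fin g) (Fin k) ℤ)
    (hXU : X * U = 1) : WallHom (stdWall P k) (stdWall P g) where
  hom :=
    { neg := (vecMulLinear X).toAddMonoidHom
      pos := U.mulVecLin.toAddMonoidHom.prodMap Xᵀ.zsmulVec
      comm := fun (a : Fin k → ℤ) h => by
        change ((U *ᵥ 0 : Fin g → ℤ), fun i => ∑ j, X j i • (a j • h))
          = ((0 : Fin g → ℤ), fun i => (a ᵥ* X) i • h)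
        refine Prod.ext (mulVec_zero U) (funext fun i => ?_)
        simp [vecMul, dotProduct, Finset.sum_smul, smul_smul, mul_comm] }
  isWall := by
    have key : ∀ w v, ∑ i, (U *ᵥ w) i • Xᵀ.zsmulVec v i = ∑ j, w j • (v j : H) := by
      intro w v
      rw [Matrix.sum_smul_zsmulVec, vecMul_transpose, mulVec_mulVec, hXU, one_mulVec]
    refine ⟨fun (a : Fin k → ℤ) (w : (Fin k → ℤ) × (Fin k → H)) => ?_,
      fun (w w' : (Fin k → ℤ) × (Fin k → H)) => ?_, fun _ => rfl,
      fun (w : (Fin k → ℤ) × (Fin k → H)) => ?_⟩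
    · change (a ᵥ* X) ⬝ᵥ (U *ᵥ w.1) = a ⬝ᵥ w.1
      rw [← dotProduct_mulVec, mulVec_mulVec, hXU, one_mulVec]
    · change ∑ i, (U *ᵥ w'.1) i • Xᵀ.zsmulVec w.2 i
          + P.eps • ∑ i, (U *ᵥ w.1) i • Xᵀ.zsmulVec w'.2 i
        = ∑ i, w'.1 i • w.2 i + P.eps • ∑ i, w.1 i • w'.2 i
      rw [key, key]
    · change P.bd (∑ i, (U *ᵥ w.1) i • Xᵀ.zsmulVec w.2 i) = P.bd (∑ i, w.1 i • w.2 i)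
      rw [key]

theorem exists_stdWallHom_pred_into_ker {g : ℕ} (ψ : HPairHom (stdPair H g) (P0 H)) :
    ∃ ι : WallHom (stdWall P (g - 1)) (stdWall P g), ∀ y, ψ.pos (ι.hom.pos y) = 0 := by
  let c : (Fin g → ℤ) →ₗ[ℤ] ℤ := (ψ.pos.comp (AddMonoidHom.inl _ _)).toIntLinearMap
  obtain ⟨u, x, hxu, hcu⟩ := c.exists_pi_retract_in_ker (n := g - 1) (by simp)
  have hXU : LinearMap.toMatrix' x * LinearMap.toMatrix' u = 1 := by
    rw [← LinearMap.toMatrix'_comp, hxu, LinearMap.toMatrix'_id]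
  refine ⟨stdWallHom _ _ hXU, fun y => ?_⟩
  change ψ.pos (LinearMap.toMatrix' u *ᵥ y.1, _) = 0
  rw [ψ.pos_stdPair_eq_pos_fst, LinearMap.toMatrix'_mulVec]
  exact LinearMap.congr_fun hcu y.1

end StdWallHom

section WallHoms

variable {H : Type} [AddCommGroup H] {P : FormParameter H}

def HPairHom.comp {A B C : HPair H} (g : HPairHom B C) (f : HPairHom A B) : HPairHom A C where
  neg := g.neg.comp f.neg
  pos := g.pos.comp f.pos
  comm x h := by simp only [AddMonoidHom.comp_apply, f.comm, g.comm]

def HPairHom.fst (M N : HPair H) : HPairHom (M.sum N) M where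
  neg := AddMonoidHom.fst M.Neg N.Neg
  pos := AddMonoidHom.fst M.Pos N.Pos
  comm _ _ := rfl

def WallHom.comp {A B C : WallForm P} (g : WallHom B C) (f : WallHom A B) : WallHom A C where
  hom := g.hom.comp f.hom
  isWall := by
    obtain ⟨gl, gm, gn, gp⟩ := g.isWall
    obtain ⟨fl, fm, fn, fp⟩ := f.isWall
    exact ⟨fun x y => (gl _ _).trans (fl x y), fun y y' => (gm _ _).trans (fm y y'),
      fun x => (gn _).trans (fn x), fun y => (gp _).trans (fp y)⟩

def WallHom.codRestrict {M N : WallForm P} (ρ : WallHom N M) (S : SubPair M.carrier)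
    (hneg : ∀ x, ρ.hom.neg x ∈ S.neg) (hpos : ∀ y, ρ.hom.pos y ∈ S.pos) :
    WallHom N S.toWall where
  hom :=
    { neg := ρ.hom.neg.codRestrict S.neg hneg
      pos := ρ.hom.pos.codRestrict S.pos hpos
      comm x h := Subtype.ext (ρ.hom.comm x h) }
  isWall := ρ.isWall

def WallHom.codRestrictSum {M N W : WallForm P} (ρ : WallHom N (M.sum W)) (S : SubPair M.carrier)
    (hneg : ∀ x, (ρ.hom.neg x).1 ∈ S.neg) (hpos : ∀ y, (ρ.hom.pos y).1 ∈ S.pos) :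
    WallHom N (S.toWall.sum W) where
  hom :=
    { neg := (((AddMonoidHom.fst _ _).comp ρ.hom.neg).codRestrict S.neg hneg).prod
        ((AddMonoidHom.snd _ _).comp ρ.hom.neg)
      pos := (((AddMonoidHom.fst _ _).comp ρ.hom.pos).codRestrict S.pos hpos).prod
        ((AddMonoidHom.snd _ _).comp ρ.hom.pos)
      comm x h := by
        obtain ⟨hfst, hsnd⟩ := Prod.ext_iff.mp (ρ.hom.comm x h)
        exact Prod.ext (Subtype.ext hfst) hsnd }
  isWall := ρ.isWall

theorem WallAux.alphaPos_zero {C : HPair H} (S : WallAux P C) : S.alphaPos 0 = 0 := by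
  simpa using S.alphaPos_add 0 0

theorem rankGE_zero [AddGroup.FG H] (N : WallForm P) : rankGE N 0 := by
  refine ⟨⟨⟨0, 0, fun _ _ => by simp⟩, fun x y => ?_, fun y y' => ?_, fun _ => map_zero _,
    fun y => ?_⟩⟩
  · change N.str.lam 0 0 = ∑ i, x i * y.1 i
    simp
  · change N.str.mu 0 0 = ∑ i, y'.1 i • y.2 i + P.eps • ∑ i, y.1 i • y'.2 i
    simp
  · change N.str.alphaPos 0 = P.bd (∑ i, y.1 i • y.2 i)
    simp [N.str.alphaPos_zero]

end WallHoms

/-- If `r(M) ≥ g` and `φ : M → P⁰` is an `H`-map, then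
`r(ker φ) ≥ g - 1`; similarly for the stable rank. -/
theorem statement_14 {H : Type} [AddCommGroup H] [AddGroup.FG H]
    (P : FormParameter H) (M : WallForm P) (g : ℕ)
    (φ : HPairHom M.carrier (P0 H)) :
    (rankGE M g → rankGE φ.kerSub.toWall (g - 1)) ∧
    (srankGE M g → srankGE φ.kerSub.toWall (g - 1)) := by
  constructor
  · rintro ⟨f⟩
    obtain ⟨ι, hι⟩ := exists_stdWallHom_pred_into_ker (P := P) (φ.comp f.hom)
    exact ⟨(f.comp ι).codRestrict φ.kerSub (fun _ => rfl) hι⟩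
  · rintro ⟨j, ⟨f⟩⟩
    rcases Nat.eq_zero_or_pos g with rfl | hg
    · exact ⟨0, rankGE_zero _⟩
    obtain ⟨ι, hι⟩ := exists_stdWallHom_pred_into_ker (P := P)
      ((φ.comp (HPairHom.fst _ _)).comp f.hom)
    refine ⟨j, ?_⟩
    rw [← Nat.sub_add_comm hg]
    exact ⟨(f.comp ι).codRestrictSum φ.kerSub (fun _ => rfl) hι⟩
end
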